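/- arXiv:2012.08837 — 4 statements merged into one kernel-verified Lean document; each statement's English description precedes it below -/
import Mathlib

section
/- Let Φ : Z → 𝔭* be a smooth map from a Riemannian manifold Z to a Euclidean space 𝔭*, such that for each β ∈ 𝔭 the vector field generated by β is the gradient of z ↦ ⟨Φ(z), β⟩. Let ξ ∈ 𝔭* and suppose the image of Φ is contained in the union of K-orbits of a convex set Δ ⊆ 𝔞*₊ with (k·η, ξ) ≤ (η, ξ) for all k, η ∈ Δ. Let ξ' be the orthogonal projection of ξ on Δ and γ = ξ' − ξ. Then every point z with Φ(z) = ξ' is a critical point of the function ‖Φ − ξ‖², and hence γ·z = 0 (z is fixed by the flow generated by γ). -/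
open scoped RealInnerProductSpace

/-- Let `Φ : Z → 𝔭*` be a smooth map from a Riemannian manifold `Z`
(modelled on a real inner product space) to a Euclidean space `𝔭* ≃ 𝔭`, such that for
each `β ∈ 𝔭` the vector field `z ↦ β·z` generated by `β` is the gradient of
`z ↦ ⟨Φ(z), β⟩`.  Let `ξ ∈ 𝔭*`, suppose the image of `Φ` is contained in the union of
`K`-orbits of a convex set `Δ ⊆ 𝔞*₊` with `(k·η, ξ) ≤ (η, ξ)` for all `k`, `η ∈ Δ`, and
let `ξ'` be the orthogonal projection of `ξ` on `Δ`, `γ = ξ' − ξ`.  Then every `z` with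
`Φ(z) = ξ'` is a critical point of `‖Φ − ξ‖²`, and `γ·z = 0`. -/
theorem stmt_3 {Z P K : Type*}
    [NormedAddCommGroup Z] [InnerProductSpace ℝ Z] [CompleteSpace Z]
    [NormedAddCommGroup P] [InnerProductSpace ℝ P] [Group K]
    (act : K →* (P ≃ₗᵢ[ℝ] P)) (Φ : Z → P) (hΦ : Differentiable ℝ Φ)
    (Δ : Set P) (hconv : Convex ℝ Δ) (ξ : P)
    (himg : ∀ z : Z, ∃ k : K, ∃ η ∈ Δ, Φ z = act k η)
    (hKξ : ∀ k : K, ∀ η ∈ Δ, ⟪act k η, ξ⟫ ≤ ⟪η, ξ⟫)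
    (ξ' : P) (hξ'Δ : ξ' ∈ Δ) (hproj : ∀ η ∈ Δ, ‖ξ - ξ'‖ ≤ ‖ξ - η‖)
    (vf : P → Z → Z)
    (hgrad : ∀ β : P, ∀ z : Z, vf β z = gradient (fun w => ⟪Φ w, β⟫) z) :
    ∀ z : Z, Φ z = ξ' →
      gradient (fun w => ‖Φ w - ξ‖ ^ 2) z = 0 ∧ vf (ξ' - ξ) z = 0 := by
  intro z hz
  set f : Z → ℝ := fun w => ‖Φ w - ξ‖ ^ 2 with hf
  set g : Z → ℝ := fun w => ‖Φ w - ξ'‖ ^ 2 with hg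
  -- differentiability
  have hdiffsq : Differentiable ℝ (fun x : P => ‖x‖ ^ 2) :=
    (contDiff_norm_sq (𝕜 := ℝ) (E := P) (n := 1)).differentiable one_ne_zero
  have hdf : Differentiable ℝ f := hdiffsq.comp (hΦ.sub_const ξ)
  have hdg : Differentiable ℝ g := hdiffsq.comp (hΦ.sub_const ξ')
  -- z is a global minimum of f
  have hmin : ∀ w : Z, f z ≤ f w := by
    intro w
    obtain ⟨k, η, hη, heq⟩ := himg w
    have h1 : ‖η - ξ‖ ^ 2 ≤ ‖Φ w - ξ‖ ^ 2 := by
      have hn : ‖(act k) η‖ = ‖η‖ := (act k).norm_map η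
      have := hKξ k η hη
      rw [heq, norm_sub_sq_real, norm_sub_sq_real, hn]
      linarith
    have h2 : ‖ξ' - ξ‖ ^ 2 ≤ ‖η - ξ‖ ^ 2 := by
      have := hproj η hη
      rw [norm_sub_rev ξ' ξ, norm_sub_rev η ξ]
      exact pow_le_pow_left₀ (norm_nonneg _) this 2
    simp only [hf, hz]
    linarith
  have hlmf : IsLocalMin f z := Filter.Eventually.of_forall hmin
  have hlmg : IsLocalMin g z := by
    refine Filter.Eventually.of_forall fun w => ?_
    have hz0 : g z = 0 := by simp [hg, hz]
    rw [hz0]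
    exact sq_nonneg _
  have hdf0 : fderiv ℝ f z = 0 := hlmf.fderiv_eq_zero
  have hdg0 : fderiv ℝ g z = 0 := hlmg.fderiv_eq_zero
  constructor
  · show gradient f z = 0
    rw [gradient, hdf0, map_zero]
  · -- the function ⟪Φ ·, ξ' - ξ⟫ has zero derivative at z
    have hFf : HasFDerivAt f 0 z := hdf0 ▸ (hdf z).hasFDerivAt
    have hFg : HasFDerivAt g 0 z := hdg0 ▸ (hdg z).hasFDerivAt
    have hcomb : HasFDerivAt
        (fun w => (1 / 2 : ℝ) * (f w - g w + (‖ξ'‖ ^ 2 - ‖ξ‖ ^ 2))) ((0 : Z →L[ℝ] ℝ)) z := by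
      have := ((hFf.sub hFg).add_const (‖ξ'‖ ^ 2 - ‖ξ‖ ^ 2)).const_mul (1 / 2 : ℝ)
      simpa using this
    have hEq : (fun w => ⟪Φ w, ξ' - ξ⟫) =
        fun w => (1 / 2 : ℝ) * (f w - g w + (‖ξ'‖ ^ 2 - ‖ξ‖ ^ 2)) := by
      funext w
      simp only [hf, hg, norm_sub_sq_real, inner_sub_right]
      ring
    have hh : HasFDerivAt (fun w => ⟪Φ w, ξ' - ξ⟫) (0 : Z →L[ℝ] ℝ) z := hEq ▸ hcomb
    rw [hgrad, gradient, hh.fderiv, map_zero]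
end

section
/- Let M be a Kähler Hamiltonian U-manifold with moment map Φ_𝔲, equipped with an antiholomorphic involution τ compatible with a conjugation σ of U (so Φ_𝔲 ∘ τ = −σ ∘ Φ_𝔲), and let Z = M^τ. If λ ∈ 𝔱*₊ is a type such that the Kirwan–Ness stratum M_λ intersects Z, then σ(λ) = −λ. -/
/-- Let `M` be a Kähler Hamiltonian `U`-manifold with moment map `Φ_𝔲`,
equipped with an antiholomorphic involution `τ` compatible with a conjugation `σ` of `U`
(so `Φ_𝔲 ∘ τ = −σ ∘ Φ_𝔲`), and `Z = M^τ`.  The negative gradient flow of `‖Φ_𝔲‖²/2`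
commutes with `τ`, hence the limit map `m ↦ m_∞` satisfies `(τ m)_∞ = τ(m_∞)`, and the
Kirwan–Ness stratum `M_λ` consists of the points `m` with `Φ_𝔲(m_∞)` in the coadjoint
orbit `U·λ`; a coadjoint orbit `U·λ` with `λ ∈ 𝔱*₊` meets `(𝔲^{−σ})*` only if
`σ(λ) = −λ`.  If the stratum `M_λ` intersects `Z`, then `σ(λ) = −λ`. -/
theorem stmt_8 {M V U : Type*} [NormedAddCommGroup V] [InnerProductSpace ℝ V] [Group U]
    (act : U →* (V ≃ₗᵢ[ℝ] V)) (σ : V ≃ₗᵢ[ℝ] V)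
    (hσ : ∀ v : V, σ (σ v) = v)
    (Φ : M → V) (τ : M → M) (hτ : ∀ m, τ (τ m) = m)
    (hΦτ : ∀ m, Φ (τ m) = - σ (Φ m))
    (linfty : M → M) (hlimτ : ∀ m, linfty (τ m) = τ (linfty m))
    (lam : V)
    (hcoadj : (∃ v : V, (∃ u : U, act u lam = v) ∧ σ v = -v) → σ lam = -lam)
    (Mlam Zfix : Set M)
    (hMlam : Mlam = {m | ∃ u : U, Φ (linfty m) = act u lam})
    (hZ : Zfix = {m | τ m = m})
    (hne : (Mlam ∩ Zfix).Nonempty) :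
    σ lam = -lam := by
  obtain ⟨m, hm, hmZ⟩ := hne
  rw [hMlam] at hm
  rw [hZ] at hmZ
  obtain ⟨u, hu⟩ := hm
  have key : Φ (linfty m) = - σ (Φ (linfty m)) := by
    conv_lhs => rw [← hmZ, hlimτ, hΦτ]
  have hv : σ (Φ (linfty m)) = - (Φ (linfty m)) := by
    conv_lhs => rw [key]
    simp [hσ]
  exact hcoadj ⟨Φ (linfty m), ⟨u, hu.symm⟩, hv⟩
end

section
/- Let G be a Lie group, Q and P closed subgroups, Z a smooth G-manifold, and C⁻ ⊆ Z a locally closed (Q∩P)-invariant submanifold that is P-invariant. Then the natural map p : G ×_P (P ×_{Q∩P} C⁻) → G ×_Q Z is an isomorphism onto its image if and only if the map q : Q ×_{Q∩P} C⁻ → Z, [q,x] ↦ qx, is; more precisely, there is a commutative diagram identifying G ×_P (C⁻ × P/(P∩Q)) with G ×_Q (Q ×_{Q∩P} C⁻) as G-spaces, under which the map [g; z, [p]] ↦ (gz, [gp]) ∈ Z × G/Q corresponds to 1 ×_Q q_γ : G ×_Q (Q ×_{Q∩P} C⁻) → G ×_Q Z, using the canonical G-equivariant identification Z × G/Q ≅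 G ×_Q Z. -/
/-! STATEMENT 17: For a Lie group `G` with closed subgroups `Q`, `P` acting on `Z` and a
`P`-invariant (hence `Q∩P`-invariant) locally closed submanifold `C⁻ ⊆ Z`, the natural
map `p : G ×_P (P ×_{Q∩P} C⁻) → Z × G/Q`, `[g; z, [p]] ↦ (gz, [gp])`, corresponds, under
the canonical identifications `G ×_P (C⁻ × P/(P∩Q)) ≅ G ×_Q (Q ×_{Q∩P} C⁻)`
(both being `G ×_{Q∩P} C⁻`) and `Z × G/Q ≅ G ×_Q Z`, to the map
`1 ×_Q q : G ×_Q (Q ×_{Q∩P} C⁻) → G ×_Q Z` induced by `q : Q ×_{Q∩P} C⁻ → Z`,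
`[q,x] ↦ qx`; in particular `p` is injective (an isomorphism onto its image) iff `q`
is.  Below, the quotients are realised as `Quot` of the corresponding relations. -/

/-- The relation on `G × C` defining `G ×_{Q∩P} C⁻ ≅ G ×_P (P ×_{Q∩P} C⁻)
≅ G ×_Q (Q ×_{Q∩P} C⁻)`. -/
def relQP {G : Type*} [Group G] (Q P : Subgroup G) {Z : Type*} [MulAction G Z]
    (C : Set Z) (a b : G × C) : Prop :=
  ∃ s : G, s ∈ Q ⊓ P ∧ b.1 = a.1 * s ∧ (b.2 : Z) = s⁻¹ • (a.2 : Z)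

/-- The relation on `G × Z` defining the associated space `G ×_Q Z`. -/
def relQ {G : Type*} [Group G] (Q : Subgroup G) {Z : Type*} [MulAction G Z]
    (a b : G × Z) : Prop :=
  ∃ s : G, s ∈ Q ∧ b.1 = a.1 * s ∧ b.2 = s⁻¹ • a.2

/-- The relation on `Q × C` defining `Q ×_{Q∩P} C⁻`. -/
def relB {G : Type*} [Group G] (Q P : Subgroup G) {Z : Type*} [MulAction G Z]
    (C : Set Z) (a b : Q × C) : Prop :=
  ∃ s : G, s ∈ Q ⊓ P ∧ (b.1 : G) = (a.1 : G) * s ∧ (b.2 : Z) = s⁻¹ • (a.2 : Z)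

/-- The map `q_γ : Q ×_{Q∩P} C⁻ → Z`, `[q, x] ↦ q·x`. -/
def qMap {G : Type*} [Group G] (Q P : Subgroup G) {Z : Type*} [MulAction G Z]
    (C : Set Z) : Quot (relB Q P C) → Z :=
  Quot.lift (fun a => (a.1 : G) • (a.2 : Z)) (by
    rintro a b ⟨s, _, h1, h2⟩
    simp only [h1, h2, mul_smul]
    rw [smul_inv_smul])

/-- The map `1 ×_Q q_γ : G ×_Q (Q ×_{Q∩P} C⁻) → G ×_Q Z` written on the model
`G ×_{Q∩P} C⁻`. -/
def pqMap {G : Type*} [Group G] (Q P : Subgroup G) {Z : Type*} [MulAction G Z]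
    (C : Set Z) : Quot (relQP Q P C) → Quot (relQ Q (Z := Z)) :=
  Quot.lift (fun a => Quot.mk _ (a.1, (a.2 : Z))) (by
    rintro a b ⟨s, hs, h1, h2⟩
    exact Quot.sound ⟨s, hs.1, h1, h2⟩)

/-- The canonical `G`-equivariant identification `G ×_Q Z ≅ Z × G/Q`,
`[g, z] ↦ (g·z, [g])`. -/
def eMap {G : Type*} [Group G] (Q : Subgroup G) {Z : Type*} [MulAction G Z] :
    Quot (relQ Q (Z := Z)) → Z × (G ⧸ Q) :=
  Quot.lift (fun a => (a.1 • a.2, QuotientGroup.mk a.1)) (by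
    rintro a b ⟨s, hs, h1, h2⟩
    refine Prod.ext ?_ ?_
    · simp [h1, h2, mul_smul, smul_inv_smul]
    · simpa [h1] using (QuotientGroup.mk_mul_of_mem a.1 hs).symm)

/-- The map `p_γ : G ×_P (C⁻ × P/(P∩Q)) → Z × G/Q`, `[g; z, [p]] ↦ (gz, [gp])`, written
on the model `G ×_{Q∩P} C⁻` (under `[g; z, [p]] ↦ [gp, p⁻¹z]`). -/
def pMap {G : Type*} [Group G] (Q P : Subgroup G) {Z : Type*} [MulAction G Z]
    (C : Set Z) : Quot (relQP Q P C) → Z × (G ⧸ Q) :=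
  Quot.lift (fun a => (a.1 • (a.2 : Z), QuotientGroup.mk a.1)) (by
    rintro a b ⟨s, hs, h1, h2⟩
    refine Prod.ext ?_ ?_
    · simp [h1, h2, mul_smul, smul_inv_smul]
    · simpa [h1] using (QuotientGroup.mk_mul_of_mem a.1 hs.1).symm)

private lemma relQP_equiv {G : Type*} [Group G] (Q P : Subgroup G) {Z : Type*}
    [MulAction G Z] (C : Set Z) : Equivalence (relQP Q P C) := by
  constructor
  · intro a; exact ⟨1, one_mem _, by simp, by simp⟩
  · rintro a b ⟨s, hs, h1, h2⟩
    exact ⟨s⁻¹, inv_mem hs, by simp [h1], by simp [h2]⟩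
  · rintro a b c ⟨s, hs, h1, h2⟩ ⟨t, ht, h3, h4⟩
    exact ⟨s * t, mul_mem hs ht, by simp [h3, h1, mul_assoc],
      by simp [h4, h2, mul_smul]⟩

private lemma relQ_equiv {G : Type*} [Group G] (Q : Subgroup G) {Z : Type*}
    [MulAction G Z] : Equivalence (relQ Q (Z := Z)) := by
  constructor
  · intro a; exact ⟨1, one_mem _, by simp, by simp⟩
  · rintro a b ⟨s, hs, h1, h2⟩
    exact ⟨s⁻¹, inv_mem hs, by simp [h1], by simp [h2]⟩
  · rintro a b c ⟨s, hs, h1, h2⟩ ⟨t, ht, h3, h4⟩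
    exact ⟨s * t, mul_mem hs ht, by simp [h3, h1, mul_assoc],
      by simp [h4, h2, mul_smul]⟩

private lemma relB_equiv {G : Type*} [Group G] (Q P : Subgroup G) {Z : Type*}
    [MulAction G Z] (C : Set Z) : Equivalence (relB Q P C) := by
  constructor
  · intro a; exact ⟨1, one_mem _, by simp, by simp⟩
  · rintro a b ⟨s, hs, h1, h2⟩
    exact ⟨s⁻¹, inv_mem hs, by simp [h1], by simp [h2]⟩
  · rintro a b c ⟨s, hs, h1, h2⟩ ⟨t, ht, h3, h4⟩
    exact ⟨s * t, mul_mem hs ht, by simp [h3, h1, mul_assoc],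
      by simp [h4, h2, mul_smul]⟩

/-- conclusion: the identification `eMap : G ×_Q Z ≅ Z × G/Q` is
bijective, the diagram commutes (`eMap ∘ (1 ×_Q q_γ) = p_γ`), and `p_γ` is injective
(an isomorphism onto its image) iff `q_γ` is. -/
theorem stmt_17 {G : Type*} [Group G] (Q P : Subgroup G)
    {Z : Type*} [MulAction G Z] (C : Set Z)
    (hC : ∀ g ∈ P, ∀ x ∈ C, g • x ∈ C) :
    Function.Bijective (eMap Q (Z := Z)) ∧
      (∀ x : Quot (relQP Q P C), eMap Q (pqMap Q P C x) = pMap Q P C x) ∧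
      (Function.Injective (pMap Q P C) ↔ Function.Injective (qMap Q P C)) := by
  have hcomm : ∀ x : Quot (relQP Q P C), eMap Q (pqMap Q P C x) = pMap Q P C x := by
    intro x; induction x using Quot.ind with | _ a => rfl
  have heinj : Function.Injective (eMap Q (Z := Z)) := by
    intro a b
    induction a using Quot.ind with | _ a =>
    induction b using Quot.ind with | _ b =>
    intro h
    have h1 : a.1 • a.2 = b.1 • b.2 := congrArg Prod.fst h
    have h2 : (QuotientGroup.mk a.1 : G ⧸ Q) = QuotientGroup.mk b.1 :=
      congrArg Prod.snd h
    have hs : a.1⁻¹ * b.1 ∈ Q := QuotientGroup.eq.mp h2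
    refine Quot.sound ⟨a.1⁻¹ * b.1, hs, by group, ?_⟩
    rw [mul_inv_rev, inv_inv, mul_smul, h1, inv_smul_smul]
  refine ⟨⟨heinj, ?_⟩, hcomm, ?_⟩
  · rintro ⟨z, g⟩
    induction g using QuotientGroup.induction_on with | _ g =>
    exact ⟨Quot.mk _ (g, g⁻¹ • z), by simp [eMap]⟩
  · constructor
    · -- p injective → q injective
      intro hp a b
      induction a using Quot.ind with | _ a =>
      induction b using Quot.ind with | _ b =>
      intro h
      have h' : qMap Q P C (Quot.mk _ a) = qMap Q P C (Quot.mk _ b) := h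
      have hQ : pqMap Q P C (Quot.mk _ ((a.1 : G), a.2)) =
          pqMap Q P C (Quot.mk _ ((b.1 : G), b.2)) := by
        refine Quot.sound ⟨(a.1 : G)⁻¹ * (b.1 : G), mul_mem (inv_mem a.1.2) b.1.2,
          by group, ?_⟩
        rw [mul_inv_rev, inv_inv, mul_smul]
        have : (a.1 : G) • (a.2 : Z) = (b.1 : G) • (b.2 : Z) := h'
        rw [this, inv_smul_smul]
      have hP : (Quot.mk (relQP Q P C) ((a.1 : G), a.2)) =
          Quot.mk _ ((b.1 : G), b.2) := by
        apply hp
        rw [← hcomm, ← hcomm, hQ]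
      obtain ⟨s, hs, h1, h2⟩ :=
        ((Equivalence.eqvGen_iff (relQP_equiv Q P C)).mp (Quot.eq.mp hP))
      exact Quot.sound ⟨s, hs, h1, h2⟩
    · -- q injective → p injective
      intro hq
      have hpq : Function.Injective (pqMap Q P C) := by
        intro a b
        induction a using Quot.ind with | _ a =>
        induction b using Quot.ind with | _ b =>
        intro h
        obtain ⟨s, hs, h1, h2⟩ :=
          ((Equivalence.eqvGen_iff (relQ_equiv Q)).mp (Quot.eq.mp h))
        dsimp only at h1 h2
        have hqeq : qMap Q P C (Quot.mk _ ((1 : Q), a.2)) =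
            qMap Q P C (Quot.mk _ ((⟨s, hs⟩ : Q), b.2)) := by
          show (1 : G) • (a.2 : Z) = s • (b.2 : Z)
          rw [h2, smul_inv_smul, one_smul]
        have := hq hqeq
        obtain ⟨t, ht, h3, h4⟩ :=
          ((Equivalence.eqvGen_iff (relB_equiv Q P C)).mp (Quot.eq.mp this))
        have hst : s = t := by simpa using h3
        exact Quot.sound ⟨s, hst ▸ ht, h1, h2⟩
      intro a b h
      exact hpq (heinj (by rw [hcomm, hcomm, h]))
end

section
/- Let γ be an element of 𝔞 acting on a manifold Z_N = Z × G/Q with fixed point n = (x, [e]), where G is a real reductive group, Q a parabolic subgroup containing the one-parameter subgroup of γ, and suppose: (i) the linearized action gives an isomorphism 𝔫^{γ>0} ≅ (T_x Z)^{γ>0}, where 𝔫 ⊆ Lie(Q); (ii) (T_n Z_N)^{γ>0} = (T_x Z)^{γ>0} ⊕ 𝔤^{γ>0}·[e]. Then (T_n Z_N)^{γ>0} ⊆ 𝔤·n, and hence 𝔤·n + (T_n Z_N)^{γ≤0} = T_n Z_N. -/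
/-- Let `γ` act on `Z_N = Z × G/Q` with fixed point `n = (x, [e])`.  With
`ρ_N = (ρ_Z, ρ_{G/Q}) : 𝔤 → T_n Z_N = T_x Z × T_{[e]}(G/Q)` the infinitesimal action,
suppose: (i) `ρ_Z` restricts to an isomorphism `𝔫^{γ>0} ≅ (T_x Z)^{γ>0}` (here:
surjective), with `𝔫^{γ>0}` annihilating `[e]` since `𝔫 ⊆ 𝔮 = Lie Q`; (ii)
`(T_n Z_N)^{γ>0} = (T_x Z)^{γ>0} ⊕ 𝔤^{γ>0}·n`.  Then `(T_n Z_N)^{γ>0} ⊆ 𝔤·n`, and hence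
`𝔤·n + (T_n Z_N)^{γ≤0} = T_n Z_N` for any complement `(T_n Z_N)^{γ≤0}` of
`(T_n Z_N)^{γ>0}`. -/
theorem stmt_18 {g TZ TGQ : Type*}
    [AddCommGroup g] [Module ℝ g] [AddCommGroup TZ] [Module ℝ TZ]
    [AddCommGroup TGQ] [Module ℝ TGQ]
    (ρZ : g →ₗ[ℝ] TZ) (ρGQ : g →ₗ[ℝ] TGQ)
    (ρN : g →ₗ[ℝ] TZ × TGQ) (hρN : ρN = ρZ.prod ρGQ)
    (gpos npos : Submodule ℝ g) (TZpos : Submodule ℝ TZ)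
    (TNpos TNle : Submodule ℝ (TZ × TGQ))
    (hiso : ∀ v ∈ TZpos, ∃ Y ∈ npos, ρZ Y = v)
    (hn0 : ∀ Y ∈ npos, ρGQ Y = 0)
    (hdec : ∀ v ∈ TNpos, ∃ X ∈ gpos, ∃ w ∈ TZpos, v = ρN X + (w, 0))
    (hcompl : TNpos ⊔ TNle = ⊤) :
    TNpos ≤ LinearMap.range ρN ∧ LinearMap.range ρN ⊔ TNle = ⊤ := by
  have hle : TNpos ≤ LinearMap.range ρN := by
    intro v hv
    obtain ⟨X, -, w, hw, hv⟩ := hdec v hv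
    obtain ⟨Y, hY, hYw⟩ := hiso w hw
    refine ⟨X + Y, ?_⟩
    have : ρN Y = (w, 0) := by
      subst hρN; simp [LinearMap.prod_apply, hYw, hn0 Y hY]
    rw [map_add, this, hv]
  refine ⟨hle, top_le_iff.mp ?_⟩
  rw [← hcompl]
  exact sup_le_sup_right hle _
end
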